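/- Let G be a finite simple graph and S ⊆ V(G) such that G ⊕ S is triangle-free, and suppose u, v ∈ S are distinct vertices with uv ∉ E(G). Then S = {u, v} ∪ (N_G(u) ∩ N_G(v)) ∪ (S ∩ (N_G(u) \ N_G(v))) ∪ (S ∩ (N_G(v) \ N_G(u))). -/

import Mathlib

/-- The partial complement `G ⊕ S` of a simple graph `G` with respect to a vertex set `S`:
distinct vertices `u, v` are adjacent iff either they are adjacent in `G` and not both
belong to `S`, or they are nonadjacent in `G` and both belong to `S`. -/
def SimpleGraph.partialComplement {V : Type*} (G : SimpleGraph V) (S : Set V) :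
    SimpleGraph V where
  Adj u v := u ≠ v ∧ ((G.Adj u v ∧ ¬(u ∈ S ∧ v ∈ S)) ∨ (¬ G.Adj u v ∧ u ∈ S ∧ v ∈ S))
  symm := by
    constructor
    intro u v h
    obtain ⟨hne, h⟩ := h
    refine ⟨hne.symm, ?_⟩
    rcases h with ⟨ha, hs⟩ | ⟨ha, hu, hv⟩
    · exact Or.inl ⟨ha.symm, fun hc => hs ⟨hc.2, hc.1⟩⟩
    · exact Or.inr ⟨fun hvu => ha hvu.symm, hv, hu⟩
  loopless := ⟨fun v h => h.1 rfl⟩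

/-! Two vertices `u, v ∈ S` that are nonadjacent in `G` are adjacent in `G ⊕ S`, so no third
vertex may be adjacent to both of them in `G ⊕ S`. A common `G`-neighbour outside `S` would be
one, and so would a vertex of `S \ {u, v}` adjacent to neither of them in `G`. -/

namespace SimpleGraph

variable {V : Type*} {G : SimpleGraph V} {S : Set V} {u v w : V}

theorem partialComplement_adj_of_not_adj (hu : u ∈ S) (hv : v ∈ S) (huv : u ≠ v)
    (hadj : ¬G.Adj u v) : (G.partialComplement S).Adj u v :=
  ⟨huv, Or.inr ⟨hadj, hu, hv⟩⟩

theorem partialComplement_adj_of_adj (hadj : G.Adj u v) (hv : v ∉ S) :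
    (G.partialComplement S).Adj u v :=
  ⟨hadj.ne, Or.inl ⟨hadj, fun h => hv h.2⟩⟩

theorem not_partialComplement_triangle (h : (G.partialComplement S).CliqueFree 3)
    (hu : u ∈ S) (hv : v ∈ S) (huv : u ≠ v) (hadj : ¬G.Adj u v)
    (hwu : (G.partialComplement S).Adj u w) (hwv : (G.partialComplement S).Adj v w) : False := by
  classical
  exact h {u, v, w}
    (is3Clique_triple_iff.2 ⟨partialComplement_adj_of_not_adj hu hv huv hadj, hwu, hwv⟩)

theorem mem_of_adj_of_adj_of_partialComplement_cliqueFree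
    (h : (G.partialComplement S).CliqueFree 3) (hu : u ∈ S) (hv : v ∈ S) (huv : u ≠ v)
    (hadj : ¬G.Adj u v) (hwu : G.Adj u w) (hwv : G.Adj v w) : w ∈ S := by
  by_contra hw
  exact not_partialComplement_triangle h hu hv huv hadj
    (partialComplement_adj_of_adj hwu hw) (partialComplement_adj_of_adj hwv hw)

theorem adj_or_adj_of_partialComplement_cliqueFree
    (h : (G.partialComplement S).CliqueFree 3) (hu : u ∈ S) (hv : v ∈ S) (huv : u ≠ v)
    (hadj : ¬G.Adj u v) (hw : w ∈ S) (hwu : w ≠ u) (hwv : w ≠ v) :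
    G.Adj u w ∨ G.Adj v w := by
  by_contra! hnot
  exact not_partialComplement_triangle h hu hv huv hadj
    (partialComplement_adj_of_not_adj hu hw hwu.symm hnot.1)
    (partialComplement_adj_of_not_adj hv hw hwv.symm hnot.2)

end SimpleGraph

theorem solution_decomposition_general {V : Type*}
    (G : SimpleGraph V) (S : Set V)
    (h : (G.partialComplement S).CliqueFree 3)
    (u v : V) (hu : u ∈ S) (hv : v ∈ S) (huv : u ≠ v) (hadj : ¬ G.Adj u v) :
    S = {u, v} ∪ (G.neighborSet u ∩ G.neighborSet v) ∪
        (S ∩ (G.neighborSet u \ G.neighborSet v)) ∪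
        (S ∩ (G.neighborSet v \ G.neighborSet u)) := by
  ext w
  simp only [Set.mem_union, Set.mem_inter_iff, Set.mem_sdiff, Set.mem_insert_iff,
    Set.mem_singleton_iff, SimpleGraph.mem_neighborSet]
  constructor
  · intro hw
    by_cases hwu : w = u
    · tauto
    by_cases hwv : w = v
    · tauto
    have := SimpleGraph.adj_or_adj_of_partialComplement_cliqueFree h hu hv huv hadj hw hwu hwv
    tauto
  · rintro ((((rfl | rfl) | ⟨hwu, hwv⟩) | ⟨hw, -⟩) | ⟨hw, -⟩)
    exacts [hu, hv,
      SimpleGraph.mem_of_adj_of_adj_of_partialComplement_cliqueFree h hu hv huv hadj hwu hwv,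
      hw, hw]

/-- If `G ⊕ S` is triangle-free and `u, v ∈ S` are distinct nonadjacent vertices of `G`,
then `S = {u, v} ∪ (N_G(u) ∩ N_G(v)) ∪ (S ∩ (N_G(u) \ N_G(v))) ∪ (S ∩ (N_G(v) \ N_G(u)))`. -/
theorem solution_decomposition {V : Type*} [Fintype V]
    (G : SimpleGraph V) (S : Set V)
    (h : (G.partialComplement S).CliqueFree 3)
    (u v : V) (hu : u ∈ S) (hv : v ∈ S) (huv : u ≠ v) (hadj : ¬ G.Adj u v) :
    S = {u, v} ∪ (G.neighborSet u ∩ G.neighborSet v) ∪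
        (S ∩ (G.neighborSet u \ G.neighborSet v)) ∪
        (S ∩ (G.neighborSet v \ G.neighborSet u)) :=
  solution_decomposition_general G S h u v hu hv huv hadj
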